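/- arXiv:1011.5610 — 4 statements merged into one kernel-verified Lean document; each statement's English description precedes it below -/
import Mathlib

section
/- The function Φ(p) = -∑_{α} b_α log(σ_α² + ∑_{k} g_{kα} p_{kα}) is an exact potential for the game with payoffs u_k(p) = ∑_α b_α log(1 + g_{kα} p_{kα}/(σ_α² + ∑_{ℓ≠k} g_{ℓα} p_{ℓα})): for every user k and any two power allocations p_k, p'_k of user k (keeping p_{-k} fixed), u_k(p_{-k}; p'_k) - u_k(p_{-k}; p_k) = Φ(p_{-k}; p_k) - Φ(p_{-k}; p'_k). -/
/-!
With the interference-plus-noise `I_α = σ_α + ∑_{ℓ ≠ k} g_{ℓα} p_{ℓα}` seen by user `k`, which does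
not depend on `p_k`, the payoff is `u_k(p) = ∑_α b_α (log (σ_α + ∑_ℓ g_{ℓα} p_{ℓα}) - log I_α)`.
The first sum is `-Φ(p)`, so `u_k + Φ` is constant in `p_k`.
-/

open Finset Function Real

namespace ParallelMAC

variable {K A : Type*} [Fintype K] [DecidableEq K]

def interference (σ : A → ℝ) (g : K → A → ℝ) (p : K → A → ℝ) (k : K) (α : A) : ℝ :=
  σ α + ∑ ℓ ∈ univ.erase k, g ℓ α * p ℓ α

theorem interference_update_self (σ : A → ℝ) (g p : K → A → ℝ) (k : K) (q : A → ℝ) :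
    interference σ g (update p k q) k = interference σ g p k := by
  ext α
  refine congrArg (σ α + ·) (sum_congr rfl fun ℓ hℓ => ?_)
  rw [update_of_ne (ne_of_mem_erase hℓ)]

theorem interference_pos {σ : A → ℝ} {g p : K → A → ℝ} (hσ : ∀ α, 0 < σ α)
    (hg : ∀ k α, 0 ≤ g k α) (hp : ∀ k α, 0 ≤ p k α) (k : K) (α : A) :
    0 < interference σ g p k α :=
  add_pos_of_pos_of_nonneg (hσ α) (sum_nonneg fun ℓ _ => mul_nonneg (hg ℓ α) (hp ℓ α))

theorem noise_add_sum_update_eq (σ : A → ℝ) (g p : K → A → ℝ) (k : K) (q : A → ℝ) (α : A) :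
    σ α + ∑ ℓ, g ℓ α * update p k q ℓ α = interference σ g p k α + g k α * q α := by
  rw [← add_sum_erase _ _ (mem_univ k), update_self, ← interference_update_self σ g p k q,
    interference]
  ring

theorem log_one_add_div_eq_log_sub_log {x y : ℝ} (hy : 0 < y) (hxy : 0 < y + x) :
    log (1 + x / y) = log (y + x) - log y := by
  rw [← log_div hxy.ne' hy.ne', add_div, div_self hy.ne']

theorem sum_log_one_add_sinr_update {b σ : A → ℝ} {g p : K → A → ℝ} [Fintype A]
    (hσ : ∀ α, 0 < σ α) (hg : ∀ k α, 0 ≤ g k α) (hp : ∀ k α, 0 ≤ p k α)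
    (k : K) {q : A → ℝ} (hq : ∀ α, 0 ≤ q α) :
    ∑ α, b α * log (1 + g k α * update p k q k α /
        (σ α + ∑ ℓ ∈ univ.erase k, g ℓ α * update p k q ℓ α))
      = ∑ α, b α * log (σ α + ∑ ℓ, g ℓ α * update p k q ℓ α)
        - ∑ α, b α * log (interference σ g p k α) := by
  rw [← sum_sub_distrib]
  refine sum_congr rfl fun α _ => ?_
  have hI := interference_pos hσ hg hp k α
  have hsignal : 0 ≤ g k α * q α := mul_nonneg (hg k α) (hq α)
  rw [update_self, ← interference, interference_update_self, noise_add_sum_update_eq,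
    log_one_add_div_eq_log_sub_log hI (by linarith), mul_sub]

end ParallelMAC

open ParallelMAC in
theorem exact_potential_general {K A : Type*} [Fintype K] [Fintype A] [DecidableEq K]
    (b σ : A → ℝ) (g : K → A → ℝ)
    (hσ : ∀ α, 0 < σ α) (hg : ∀ k α, 0 < g k α)
    (u : K → (K → A → ℝ) → ℝ)
    (hu : ∀ k p, u k p = ∑ α, b α * Real.log (1 + g k α * p k α /
        (σ α + ∑ ℓ ∈ Finset.univ.erase k, g ℓ α * p ℓ α)))
    (Φ : (K → A → ℝ) → ℝ)
    (hΦ : ∀ p, Φ p = -∑ α, b α * Real.log (σ α + ∑ k, g k α * p k α))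
    (p : K → A → ℝ) (hp : ∀ k α, 0 ≤ p k α)
    (k : K) (pk pk' : A → ℝ) (hpk : ∀ α, 0 ≤ pk α) (hpk' : ∀ α, 0 ≤ pk' α) :
    u k (Function.update p k pk') - u k (Function.update p k pk)
      = Φ (Function.update p k pk) - Φ (Function.update p k pk') := by
  have hg' : ∀ k α, 0 ≤ g k α := fun k α => (hg k α).le
  rw [hu, hu, hΦ, hΦ, sum_log_one_add_sinr_update hσ hg' hp k hpk',
    sum_log_one_add_sinr_update hσ hg' hp k hpk]
  ring

/-- Φ is an exact potential for the parallel MAC game: for any user k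
and any two power allocations p_k, p'_k (other users fixed),
u_k(p_{-k};p'_k) - u_k(p_{-k};p_k) = Φ(p_{-k};p_k) - Φ(p_{-k};p'_k). -/
theorem exact_potential {K A : Type*} [Fintype K] [Fintype A] [DecidableEq K]
    (b σ : A → ℝ) (g : K → A → ℝ)
    (hb : ∀ α, 0 < b α) (hσ : ∀ α, 0 < σ α) (hg : ∀ k α, 0 < g k α)
    (u : K → (K → A → ℝ) → ℝ)
    (hu : ∀ k p, u k p = ∑ α, b α * Real.log (1 + g k α * p k α /
        (σ α + ∑ ℓ ∈ Finset.univ.erase k, g ℓ α * p ℓ α)))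
    (Φ : (K → A → ℝ) → ℝ)
    (hΦ : ∀ p, Φ p = -∑ α, b α * Real.log (σ α + ∑ k, g k α * p k α))
    (p : K → A → ℝ) (hp : ∀ k α, 0 ≤ p k α)
    (k : K) (pk pk' : A → ℝ) (hpk : ∀ α, 0 ≤ pk α) (hpk' : ∀ α, 0 ≤ pk' α) :
    u k (Function.update p k pk') - u k (Function.update p k pk)
      = Φ (Function.update p k pk) - Φ (Function.update p k pk') :=
  exact_potential_general b σ g hσ hg u hu Φ hΦ p hp k pk pk' hpk hpk'
end

section
/- Suppose q is a power profile at Nash equilibrium of the parallel MAC game (satisfying the KKT conditions). Then for every user k and every pair of nodes α, β in the support of q_k (i.e., q_{kα} > 0 and q_{kβ} > 0), one has g_{kα}/g_{kβ} = r_α/r_β, where r_α = (σ_α² + ∑_ℓ g_{ℓα} q_{ℓα})/b_α. -/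
/-!
On the support of `q k` the KKT equality rearranges to `g k γ = lam k * r γ`; the multiplier
`lam k` equals a positive quantity there, so it cancels from the ratio `g k α / g k β`.
-/

open Finset

lemma eq_mul_div_of_mul_div_eq {F : Type*} [Field F] {b g D c : F} (hD : D ≠ 0) (hb : b ≠ 0)
    (h : b * g / D = c) : g = c * (D / b) := by
  rw [← h]
  field_simp

lemma noise_add_interference_pos {K A : Type*} [Fintype K] {σ : A → ℝ} {g q : K → A → ℝ}
    {α : A} (hσ : 0 < σ α) (hg : ∀ ℓ, 0 ≤ g ℓ α) (hq : ∀ ℓ, 0 ≤ q ℓ α) :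
    0 < σ α + ∑ ℓ, g ℓ α * q ℓ α :=
  add_pos_of_pos_of_nonneg hσ (sum_nonneg fun ℓ _ => mul_nonneg (hg ℓ) (hq ℓ))

theorem waterfilling_ratio_general {K A : Type*} [Fintype K]
    (b σ : A → ℝ) (g : K → A → ℝ)
    (hb : ∀ α, 0 < b α) (hσ : ∀ α, 0 < σ α) (hg : ∀ k α, 0 < g k α)
    (q : K → A → ℝ) (hq : ∀ k α, 0 ≤ q k α)
    (lam : K → ℝ)
    (hKKT₂ : ∀ k α, 0 < q k α →
      b α * g k α / (σ α + ∑ ℓ, g ℓ α * q ℓ α) = lam k)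
    (r : A → ℝ) (hr : ∀ α, r α = (σ α + ∑ ℓ, g ℓ α * q ℓ α) / b α)
    (k : K) (α β : A) (hα : 0 < q k α) (hβ : 0 < q k β) :
    g k α / g k β = r α / r β := by
  have hD : ∀ γ, 0 < σ γ + ∑ ℓ, g ℓ γ * q ℓ γ := fun γ =>
    noise_add_interference_pos (hσ γ) (fun ℓ => (hg ℓ γ).le) (fun ℓ => hq ℓ γ)
  have hgain : ∀ γ, 0 < q k γ → g k γ = lam k * r γ := fun γ hγ => by
    rw [hr γ]
    exact eq_mul_div_of_mul_div_eq (hD γ).ne' (hb γ).ne' (hKKT₂ k γ hγ)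
  have hlam_pos : 0 < lam k :=
    hKKT₂ k α hα ▸ div_pos (mul_pos (hb α) (hg k α)) (hD α)
  rw [hgain α hα, hgain β hβ, mul_div_mul_left _ _ hlam_pos.ne']

/-- At a Nash equilibrium q of the parallel MAC game (characterized by
the KKT conditions), for every user k and nodes α, β in the support of q_k,
g_{kα}/g_{kβ} = r_α/r_β, where r_α = (σ_α² + ∑_ℓ g_{ℓα} q_{ℓα})/b_α. -/
theorem waterfilling_ratio {K A : Type*} [Fintype K] [Fintype A]
    (b σ : A → ℝ) (g : K → A → ℝ) (P : K → ℝ)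
    (hb : ∀ α, 0 < b α) (hσ : ∀ α, 0 < σ α) (hg : ∀ k α, 0 < g k α)
    (hP : ∀ k, 0 < P k)
    (q : K → A → ℝ) (hq : ∀ k α, 0 ≤ q k α) (hbudget : ∀ k, ∑ α, q k α = P k)
    (lam : K → ℝ) (hlam : ∀ k, 0 ≤ lam k)
    (hKKT₁ : ∀ k α, b α * g k α / (σ α + ∑ ℓ, g ℓ α * q ℓ α) ≤ lam k)
    (hKKT₂ : ∀ k α, 0 < q k α →
      b α * g k α / (σ α + ∑ ℓ, g ℓ α * q ℓ α) = lam k)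
    (r : A → ℝ) (hr : ∀ α, r α = (σ α + ∑ ℓ, g ℓ α * q ℓ α) / b α)
    (k : K) (α β : A) (hα : 0 < q k α) (hβ : 0 < q k β) :
    g k α / g k β = r α / r β :=
  waterfilling_ratio_general b σ g hb hσ hg q hq lam hKKT₂ r hr k α β hα hβ
end

section
/- Let q ∈ Δ and p(t) be a solution of the replicator dynamics dp_{kα}/dt = p_{kα}(v_{kα}(p) − v_k(p)) with p_{kα}(t) > 0 whenever q_{kα} > 0. Then the Kullback–Leibler divergence H_q(p) = ∑_{k,α} q_{kα} log(q_{kα}/p_{kα}) satisfies dH_q(p(t))/dt = ∑_{k,α} (p_{kα}(t) − q_{kα}) v_{kα}(p(t)). -/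
open Real

/- Along the replicator flow each log-share moves at its relative fitness, d/dt log p_{kα} =
v_{kα} − v̄_k, so dH_q/dt = ∑ q_{kα}(v̄_k − v_{kα}). Since ∑_α q_{kα} = P_k, the first term
equals ∑_α p_{kα} v_{kα}, which gives ∑ (p_{kα} − q_{kα}) v_{kα}. -/

/-- For `c = 0` the function vanishes identically, so `f t` may then be zero. -/
theorem hasDerivAt_mul_log_div {f : ℝ → ℝ} {c g t : ℝ} (hf : HasDerivAt f (f t * g) t)
    (hft : c ≠ 0 → f t ≠ 0) :
    HasDerivAt (fun s => c * log (c / f s)) (-(c * g)) t := by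
  rcases eq_or_ne c 0 with rfl | hc
  · simpa using hasDerivAt_const t (0 : ℝ)
  have hft := hft hc
  have hquot : HasDerivAt (fun s => c / f s) (-(c * g) / f t) t :=
    ((hasDerivAt_const t c).fun_div hf hft).congr_deriv (by field_simp; ring)
  exact ((hquot.log (div_ne_zero hc hft)).const_mul c).congr_deriv (by field_simp)

theorem sum_mul_mean_sub_eq {ι : Type*} [Fintype ι] (q x w : ι → ℝ) (hq : ∑ i, q i ≠ 0) :
    ∑ i, q i * ((∑ j, q j)⁻¹ * ∑ j, x j * w j - w i) = ∑ i, (x i - q i) * w i := by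
  simp only [mul_sub, ← Finset.sum_mul, mul_inv_cancel_left₀ hq, Finset.sum_sub_distrib, sub_mul]

theorem KL_derivative_general {K A : Type*} [Fintype K] [Fintype A]
    (P : K → ℝ) (hP : ∀ k, 0 < P k)
    (v : K → A → (K → A → ℝ) → ℝ)
    (vbar : K → (K → A → ℝ) → ℝ)
    (hvbar : ∀ k x, vbar k x = (P k)⁻¹ * ∑ β, x k β * v k β x)
    (q : K → A → ℝ) (hq : ∀ k α, 0 ≤ q k α) (hqsum : ∀ k, ∑ α, q k α = P k)
    (p : ℝ → K → A → ℝ)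
    (hsupp : ∀ t k α, 0 < q k α → 0 < p t k α)
    (hrep : ∀ t k α, HasDerivAt (fun s => p s k α)
      (p t k α * (v k α (p t) - vbar k (p t))) t)
    (t : ℝ) :
    HasDerivAt (fun s => ∑ k, ∑ α, q k α * Real.log (q k α / p s k α))
      (∑ k, ∑ α, (p t k α - q k α) * v k α (p t)) t := by
  have hterm : ∀ k α, HasDerivAt (fun s => q k α * log (q k α / p s k α))
      (q k α * (vbar k (p t) - v k α (p t))) t := fun k α =>
    (hasDerivAt_mul_log_div (hrep t k α)
      fun hq0 => (hsupp t k α ((hq k α).lt_of_ne' hq0)).ne').congr_deriv (by ring)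
  refine (HasDerivAt.fun_sum fun k _ => HasDerivAt.fun_sum fun α _ => hterm k α).congr_deriv
    (Finset.sum_congr rfl fun k _ => ?_)
  have hP' : ∑ α, q k α ≠ 0 := (hqsum k).symm ▸ (hP k).ne'
  rw [hvbar, ← hqsum k]
  exact sum_mul_mean_sub_eq _ _ _ hP'

/-- Along the replicator dynamics, the Kullback–Leibler divergence
H_q(p) = ∑_{k,α} q_{kα} log(q_{kα}/p_{kα}) satisfies
dH_q(p(t))/dt = ∑_{k,α} (p_{kα}(t) − q_{kα}) v_{kα}(p(t)). -/
theorem KL_derivative {K A : Type*} [Fintype K] [Fintype A]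
    (P : K → ℝ) (hP : ∀ k, 0 < P k)
    (v : K → A → (K → A → ℝ) → ℝ) (hv : ∀ k α, Continuous (v k α))
    (vbar : K → (K → A → ℝ) → ℝ)
    (hvbar : ∀ k x, vbar k x = (P k)⁻¹ * ∑ β, x k β * v k β x)
    (q : K → A → ℝ) (hq : ∀ k α, 0 ≤ q k α) (hqsum : ∀ k, ∑ α, q k α = P k)
    (p : ℝ → K → A → ℝ)
    (hmem : ∀ t k α, 0 ≤ p t k α) (hsum : ∀ t k, ∑ α, p t k α = P k)
    (hsupp : ∀ t k α, 0 < q k α → 0 < p t k α)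
    (hrep : ∀ t k α, HasDerivAt (fun s => p s k α)
      (p t k α * (v k α (p t) - vbar k (p t))) t)
    (t : ℝ) :
    HasDerivAt (fun s => ∑ k, ∑ α, q k α * Real.log (q k α / p s k α))
      (∑ k, ∑ α, (p t k α - q k α) * v k α (p t)) t :=
  KL_derivative_general P hP v vbar hvbar q hq hqsum p hsupp hrep t
end

section
/- Let Θ(p, t) be a continuous semiflow on a compact metric space Δ satisfying Θ(p, t+s) = Θ(Θ(p,t), s), and suppose there is a family of continuous functions {H_q}_{q ∈ Q} indexed by a closed set Q ⊆ Δ such that each H_q ≥ 0 vanishes exactly at q, each t ↦ H_q(Θ(p,t)) is nonincreasing, and is strictly decreasing whenever Θ(p,t) ∉ Q. Then every trajectory t ↦ Θ(p,t) for which some H_q(p) is finite converges to a single point of Q. -/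
/-!
Along a trajectory from `p` with `H q p < ⊤`, the values `H q (Θ p t)` decrease to a finite
limit `L`. By compactness some sequence `Θ p (τ n)` with `τ n → ∞` converges to a point `x`,
and `H q` equals `L` along the whole trajectory of `x`; strict decrease outside `Q` then forces
`x ∈ Q`. Now `H x` is a Lyapunov function as well, it tends to `0` along `Θ p (τ n)`, hence
along the whole trajectory by monotonicity, and since `H x` vanishes only at `x` on a compact
space, the trajectory converges to `x`.
-/

open Filter Topology
open scoped NNReal ENNReal

theorem MapClusterPt.eq_of_tendsto {X Y : Type*} [TopologicalSpace X] [T2Space X] {l : Filter Y}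
    {u : Y → X} {x y : X} (hx : MapClusterPt x l u) (hy : Tendsto u l (𝓝 y)) : x = y :=
  eq_of_nhds_neBot (hx.clusterPt.mono hy)

theorem tendsto_of_tendsto_comp_of_eq_imp {X Y Z : Type*} [TopologicalSpace X] [CompactSpace X]
    [TopologicalSpace Z] [T2Space Z] {f : X → Z} (hf : Continuous f) {x : X} {z : Z}
    (hfx : ∀ y, f y = z → y = x) {l : Filter Y} {u : Y → X} (hu : Tendsto (f ∘ u) l (𝓝 z)) :
    Tendsto u l (𝓝 x) :=
  tendsto_nhds_of_unique_mapClusterPt fun _ hy =>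
    hfx _ ((hy.tendsto_comp (hf.tendsto _)).eq_of_tendsto hu)

theorem Antitone.tendsto_of_tendsto_comp {α β ι : Type*} [Preorder ι] [CompleteLinearOrder α]
    [TopologicalSpace α] [OrderTopology α] {f : ι → α} (hf : Antitone f) {l : Filter β} [l.NeBot]
    {τ : β → ι} (hτ : Tendsto τ l atTop) {a : α} (ha : Tendsto (f ∘ τ) l (𝓝 a)) :
    Tendsto f atTop (𝓝 a) := by
  have hinf := tendsto_atTop_iInf hf
  rwa [tendsto_nhds_unique (hinf.comp hτ) ha] at hinf

theorem apply_omegaLimit_eq_of_tendsto {X T Z : Type*} [TopologicalSpace X] [AddCommMonoid T]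
    [PartialOrder T] [CanonicallyOrderedAdd T] [TopologicalSpace Z] [T2Space Z] {Θ : X → T → X}
    (hΘ : ∀ s, Continuous fun y => Θ y s)
    (hflow : ∀ p t s, Θ p (t + s) = Θ (Θ p t) s) {g : X → Z} (hg : Continuous g) {p x : X} {c : Z}
    (hc : Tendsto (fun t => g (Θ p t)) atTop (𝓝 c)) {β : Type*} {l : Filter β} [l.NeBot]
    {τ : β → T} (hτ : Tendsto τ l atTop) (hx : Tendsto (fun n => Θ p (τ n)) l (𝓝 x)) (s : T) :
    g (Θ x s) = c := by
  have hτs : Tendsto (fun n => τ n + s) l atTop := tendsto_atTop_mono (fun _ => le_self_add) hτ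
  have hshift : Tendsto (fun n => g (Θ p (τ n + s))) l (𝓝 (g (Θ x s))) := by
    simp only [hflow]
    exact ((hg.comp (hΘ s)).tendsto x).comp hx
  exact tendsto_nhds_unique hshift (hc.comp hτs)

theorem semiflow_convergence_general {Δ : Type*} [MetricSpace Δ] [CompactSpace Δ]
    (Θ : Δ → ℝ≥0 → Δ)
    (hcont : Continuous fun x : Δ × ℝ≥0 => Θ x.1 x.2)
    (hzero : ∀ p, Θ p 0 = p)
    (hflow : ∀ p (t s : ℝ≥0), Θ p (t + s) = Θ (Θ p t) s)
    (Q : Set Δ)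
    (H : Δ → Δ → ℝ≥0∞)
    (hHcont : ∀ q ∈ Q, Continuous (H q))
    (hH0 : ∀ q ∈ Q, ∀ x, H q x = 0 ↔ x = q)
    (hmono : ∀ q ∈ Q, ∀ p, ∀ s t : ℝ≥0, s ≤ t → H q (Θ p t) ≤ H q (Θ p s))
    (hstrict : ∀ q ∈ Q, ∀ p, ∀ s t : ℝ≥0, s < t → Θ p s ∉ Q →
      H q (Θ p s) ≠ ⊤ → H q (Θ p t) < H q (Θ p s)) :
    ∀ p : Δ, (∃ q ∈ Q, H q p ≠ ⊤) →
      ∃ q' ∈ Q, Tendsto (fun t => Θ p t) atTop (𝓝 q') := by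
  rintro p ⟨q, hq, hfin⟩
  obtain ⟨x, -, φ, hφ, hx⟩ :=
    isCompact_univ.tendsto_subseq (x := fun n : ℕ => Θ p n) fun _ => Set.mem_univ _
  have hτ : Tendsto (fun n => (φ n : ℝ≥0)) atTop atTop :=
    tendsto_natCast_atTop_atTop.comp hφ.tendsto_atTop
  have hΘ (s : ℝ≥0) : Continuous fun y => Θ y s := hcont.comp (.prodMk_left s)
  set L := ⨅ t, H q (Θ p t)
  have hL : L ≠ ⊤ := ne_top_of_le_ne_top hfin (by simpa [hzero] using iInf_le (fun t => H q (Θ p t)) 0)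
  have hconst : ∀ s, H q (Θ x s) = L := apply_omegaLimit_eq_of_tendsto hΘ hflow (hHcont q hq)
    (tendsto_atTop_iInf (hmono q hq p)) hτ hx
  have hxQ : x ∈ Q := by
    by_contra hxQ
    have hlt := hstrict q hq x 0 1 one_pos (by rwa [hzero]) (by rwa [hconst])
    rw [hconst, hconst] at hlt
    exact lt_irrefl L hlt
  refine ⟨x, hxQ, tendsto_of_tendsto_comp_of_eq_imp (hHcont x hxQ) (fun y => (hH0 x hxQ y).1) ?_⟩
  refine Antitone.tendsto_of_tendsto_comp (hmono x hxQ p) hτ ?_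
  simpa [Function.comp_def, (hH0 x hxQ x).2 rfl] using ((hHcont x hxQ).tendsto x).comp hx

/-- Let Θ be a continuous semiflow on a compact metric space Δ, and let
{H_q}_{q∈Q} be a family of Lyapunov-type functions indexed by a closed set Q, each
nonnegative (valued in [0,∞]), vanishing exactly at q, nonincreasing along trajectories,
and strictly decreasing along trajectories outside Q. Then every trajectory starting at
a point where some H_q is finite converges to a single point of Q. -/
theorem semiflow_convergence {Δ : Type*} [MetricSpace Δ] [CompactSpace Δ]
    (Θ : Δ → ℝ≥0 → Δ)
    (hcont : Continuous fun x : Δ × ℝ≥0 => Θ x.1 x.2)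
    (hzero : ∀ p, Θ p 0 = p)
    (hflow : ∀ p (t s : ℝ≥0), Θ p (t + s) = Θ (Θ p t) s)
    (Q : Set Δ) (hQ : IsClosed Q)
    (H : Δ → Δ → ℝ≥0∞)
    (hHcont : ∀ q ∈ Q, Continuous (H q))
    (hH0 : ∀ q ∈ Q, ∀ x, H q x = 0 ↔ x = q)
    (hmono : ∀ q ∈ Q, ∀ p, ∀ s t : ℝ≥0, s ≤ t → H q (Θ p t) ≤ H q (Θ p s))
    (hstrict : ∀ q ∈ Q, ∀ p, ∀ s t : ℝ≥0, s < t → Θ p s ∉ Q →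
      H q (Θ p s) ≠ ⊤ → H q (Θ p t) < H q (Θ p s)) :
    ∀ p : Δ, (∃ q ∈ Q, H q p ≠ ⊤) →
      ∃ q' ∈ Q, Tendsto (fun t => Θ p t) atTop (𝓝 q') :=
  semiflow_convergence_general Θ hcont hzero hflow Q H hHcont hH0 hmono hstrict
end
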